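/- arXiv:2410.07435 — 6 statements merged into one kernel-verified Lean document; each statement's English description precedes it below -/
import Mathlib

section
/- Let A be a finite alphabet, let H and V be finite sets of words over A, and let k be a fixed positive integer. Let m_k(n) denote the number of k × n matrices with entries in A such that every row avoids every pattern in H and every column avoids every pattern in V. Then the sequence m_k(n) satisfies a linear recurrence with constant coefficients: there exist a positive integer L and rational numbers c_0, c_1, …, c_L, not all zero (with c_L ≠ 0), such that for all positive integers n, c_0·m_k(n) + c_1·m_k(n+1) + … + c_L·m_k(n+L) = 0. -/
/-!
Reading a `k × n` matrix column by column turns it into a word of length `n` over the finite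
alphabet `Fin k → A` of columns. The valid matrices form a regular language of such words: it is
a finite intersection of languages avoiding one fixed factor (a forbidden column is a forbidden
factor of length one), some of them pulled back along the projections onto a row. A language
avoiding the factor `p` is regular by Myhill–Nerode, since its left quotient by `x` only depends
on whether `x` contains `p` and on the last `|p|` letters of `x`.

The number of words of length `n` in a regular language `L` is a coordinate of `Tⁿ v`, where
`T` is the transfer matrix of the automaton whose states are the left quotients of `L`. By
Cayley–Hamilton the coefficients of the characteristic polynomial of `T` give the recurrence.
-/

open Finset

/-- `avoidCount A H V k n` is the number of `k × n` matrices with entries in the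
finite alphabet `A` whose every row (read left to right) avoids every pattern of `H`
(as a contiguous subword) and whose every column (read top to bottom) avoids every
pattern of `V`. -/
def avoidCount (A : Type) [Fintype A] [DecidableEq A] (H V : Finset (List A))
    (k n : ℕ) : ℕ :=
  Fintype.card {M : Fin k → Fin n → A //
    (∀ i, ∀ p ∈ H, ¬ p <:+: List.ofFn fun j => M i j) ∧
    (∀ j, ∀ p ∈ V, ¬ p <:+: List.ofFn fun i => M i j)}

namespace List

theorem infix_append_iff_infix_or_infix_drop_append {α : Type*} (p x y : List α) :
    p <:+: x ++ y ↔ p <:+: x ∨ p <:+: x.drop (x.length - p.length) ++ y := by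
  refine ⟨fun h => ?_, ?_⟩
  · rcases infix_append_iff.1 h with hx | hy | ⟨l₁, l₂, rfl, h₁, h₂⟩
    · exact .inl hx
    · exact .inr (infix_append_of_infix_right hy)
    · refine .inr (infix_append_iff.2 (.inr (.inr ⟨l₁, l₂, rfl, ?_, h₂⟩)))
      refine suffix_of_suffix_length_le h₁ (drop_suffix _ _) ?_
      have hl₁ := h₁.length_le
      simp only [length_drop, length_append]
      omega
  · rintro (h | h)
    · exact infix_append_of_infix_left h
    · exact h.trans (infix_append_iff.2 (.inr (.inr ⟨_, y, rfl, drop_suffix _ x, prefix_refl y⟩)))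

end List

open Matrix

theorem Matrix.sum_charpoly_coeff_smul_pow_add_mulVec {R ι : Type*} [CommRing R] [Nontrivial R]
    [Fintype ι] [DecidableEq ι] (T : Matrix ι ι R) (w : ι → R) (n : ℕ) :
    ∑ i ∈ range (Fintype.card ι + 1), T.charpoly.coeff i • (T ^ (n + i) *ᵥ w) = 0 := by
  have hT := T.aeval_self_charpoly
  rw [Polynomial.aeval_eq_sum_range, T.charpoly_natDegree_eq_dim] at hT
  calc _ = ∑ i ∈ range (Fintype.card ι + 1), T.charpoly.coeff i • (T ^ i *ᵥ (T ^ n *ᵥ w)) := by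
        simp only [mulVec_mulVec, ← pow_add, add_comm n]
    _ = (∑ i ∈ range (Fintype.card ι + 1), T.charpoly.coeff i • T ^ i) *ᵥ (T ^ n *ᵥ w) := by
        simp only [sum_mulVec, smul_mulVec]
    _ = 0 := by rw [hT, zero_mulVec]

namespace Language

variable {α : Type*}

@[simp]
theorem mem_iInf {ι : Sort*} {L : ι → Language α} {x : List α} :
    x ∈ (⨅ i, L i) ↔ ∀ i, x ∈ L i :=
  Set.mem_iInter

theorem IsRegular.preimage_map {β : Type*} {L : Language β} (hL : L.IsRegular) (f : α → β) :
    IsRegular (List.map f ⁻¹' L : Language α) := by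
  obtain ⟨σ, _, M, rfl⟩ := hL
  exact ⟨σ, inferInstance, M.comap f, M.accepts_comap f⟩

theorem IsRegular.iInf {ι : Type*} [Finite ι] {L : ι → Language α}
    (hL : ∀ i, (L i).IsRegular) : (⨅ i, L i).IsRegular := by
  refine .of_finite_range_leftQuotient <|
    ((Set.Finite.pi fun i => (hL i).finite_range_leftQuotient).image fun Q => ⨅ i, Q i).subset ?_
  rintro _ ⟨x, rfl⟩
  refine ⟨fun i => (L i).leftQuotient x, fun i _ => ⟨x, rfl⟩, ?_⟩
  ext y
  simp

theorem isRegular_setOf_not_infix [Finite α] (p : List α) :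
    IsRegular ({l | ¬ p <:+: l} : Language α) := by
  set K : Language α := {l | ¬ p <:+: l}
  refine .of_finite_range_leftQuotient <|
    (((List.finite_length_le α p.length).image K.leftQuotient).insert ⊥).subset ?_
  rintro _ ⟨x, rfl⟩
  by_cases hx : p <:+: x
  · left
    ext y
    change ¬ p <:+: x ++ y ↔ False
    simpa using List.infix_append_of_infix_left hx
  · right
    refine ⟨x.drop (x.length - p.length), by simp; omega, ?_⟩
    ext y
    change ¬ p <:+: _ ++ y ↔ ¬ p <:+: x ++ y
    rw [List.infix_append_iff_infix_or_infix_drop_append p x y, or_iff_right hx]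

noncomputable def wordCount (L : Language α) (n : ℕ) : ℕ :=
  Nat.card {w : Fin n → α // List.ofFn w ∈ L}

theorem wordCount_succ [Fintype α] (L : Language α) (n : ℕ) :
    L.wordCount (n + 1) = ∑ a, (L.leftQuotient [a]).wordCount n := by
  simp only [wordCount]
  rw [← Nat.card_sigma]
  refine Nat.card_congr <| (Equiv.subtypeEquiv (Fin.consEquiv fun _ => α).symm fun w => ?_).trans
    (Equiv.subtypeProdEquivSigmaSubtype fun a w => List.ofFn w ∈ L.leftQuotient [a])
  rw [List.ofFn_succ]
  rfl

theorem IsRegular.exists_wordCount_recurrence [Fintype α] {L : Language α} (hL : L.IsRegular) :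
    ∃ (d : ℕ) (c : ℕ → ℚ), 0 < d ∧ c d ≠ 0 ∧
      ∀ n, ∑ i ∈ range (d + 1), c i * (L.wordCount (n + i) : ℚ) = 0 := by
  classical
  let S := Set.range L.leftQuotient
  have : Fintype S := hL.finite_range_leftQuotient.fintype
  let T : Matrix S S ℚ := fun s t => ∑ a, if L.toDFA.step s a = t then 1 else 0
  let v (n : ℕ) (s : S) : ℚ := (s : Language α).wordCount n
  have hstep (n : ℕ) : v (n + 1) = T *ᵥ v n := by
    ext s
    simp only [v, T, wordCount_succ, mulVec, dotProduct, sum_mul]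
    rw [sum_comm]
    simp
  have hpow (n : ℕ) : v n = T ^ n *ᵥ v 0 := by
    induction n with
    | zero => simp
    | succ n ih => rw [hstep, ih, mulVec_mulVec, pow_succ']
  refine ⟨Fintype.card S, T.charpoly.coeff, Fintype.card_pos_iff.2 ⟨L.toDFA.start⟩, ?_,
    fun n => ?_⟩
  · rw [← T.charpoly_natDegree_eq_dim, T.charpoly_monic.coeff_natDegree]
    exact one_ne_zero
  · have := congrFun (T.sum_charpoly_coeff_smul_pow_add_mulVec (v 0) n) L.toDFA.start
    simpa [← hpow, v] using this

end Language

def validColumnWords {A : Type*} (H V : Finset (List A)) (k : ℕ) : Language (Fin k → A) :=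
  {l | (∀ i, ∀ p ∈ H, ¬ p <:+: l.map (· i)) ∧ ∀ c ∈ l, ∀ p ∈ V, ¬ p <:+: List.ofFn c}

@[simp]
theorem mem_validColumnWords {A : Type*} {k : ℕ} {H V : Finset (List A)} {l : List (Fin k → A)} :
    l ∈ validColumnWords H V k ↔
      (∀ i, ∀ p ∈ H, ¬ p <:+: l.map (· i)) ∧ ∀ c ∈ l, ∀ p ∈ V, ¬ p <:+: List.ofFn c :=
  Iff.rfl

theorem isRegular_validColumnWords {A : Type*} [Finite A] (H V : Finset (List A)) (k : ℕ) :
    (validColumnWords H V k).IsRegular := by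
  have : (validColumnWords H V k : Set (List (Fin k → A))) =
      (⋂ (i : Fin k) (p : H), List.map (· i) ⁻¹' {l | ¬ p.1 <:+: l}) ∩
        ⋂ c : {c : Fin k → A // ∃ p ∈ V, p <:+: List.ofFn c}, {l | ¬ [c.1] <:+: l} := by
    refine Set.ext fun l => ?_
    simp only [validColumnWords, Set.mem_ofPred_eq, Set.mem_inter_iff, Set.mem_iInter,
      Set.mem_preimage, List.singleton_infix_iff, Subtype.forall, forall_exists_index, and_imp]
    tauto
  rw [this]
  exact .inf (.iInf fun i => .iInf fun p => (Language.isRegular_setOf_not_infix p.1).preimage_map _)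
    (.iInf fun c => Language.isRegular_setOf_not_infix _)

theorem avoidCount_eq_wordCount_validColumnWords {A : Type} [Fintype A] [DecidableEq A]
    (H V : Finset (List A)) (k n : ℕ) :
    avoidCount A H V k n = (validColumnWords H V k).wordCount n := by
  rw [avoidCount, ← Nat.card_eq_fintype_card]
  refine Nat.card_congr (Equiv.subtypeEquiv (Equiv.piComm fun _ _ => A) fun M => ?_)
  simp [List.map_ofFn, Function.comp_def, Equiv.piComm, Function.swap]

theorem avoidCount_C_finite_general (A : Type) [Fintype A] [DecidableEq A]
    (H V : Finset (List A)) (k : ℕ) :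
    ∃ (L : ℕ) (c : ℕ → ℚ), 0 < L ∧ c L ≠ 0 ∧
      ∀ n : ℕ, 0 < n →
        ∑ i ∈ Finset.range (L + 1), c i * (avoidCount A H V k (n + i) : ℚ) = 0 := by
  obtain ⟨L, c, hL, hc, hrec⟩ := (isRegular_validColumnWords H V k).exists_wordCount_recurrence
  refine ⟨L, c, hL, hc, fun n _ => ?_⟩
  simpa only [avoidCount_eq_wordCount_validColumnWords] using hrec n

/-- For a fixed number of rows `k`, the sequence counting pattern-avoiding `k × n`
matrices satisfies a linear recurrence with constant coefficients. -/
theorem avoidCount_C_finite (A : Type) [Fintype A] [DecidableEq A]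
    (H V : Finset (List A)) (k : ℕ) (hk : 0 < k) :
    ∃ (L : ℕ) (c : ℕ → ℚ), 0 < L ∧ c L ≠ 0 ∧
      ∀ n : ℕ, 0 < n →
        ∑ i ∈ Finset.range (L + 1), c i * (avoidCount A H V k (n + i) : ℚ) = 0 :=
  avoidCount_C_finite_general A H V k
end

section
/- Let a(n) be the number of 4 × 2n 0-1 matrices in which every row has exactly n ones and every column has exactly 2 ones. Then for all positive integers n: 36·(2n+3)·(2n+1)·(n+1)·a(n) − 2·(2n+3)·(10n² + 30n + 23)·a(n+1) + (n+2)³·a(n+2) = 0. -/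
open Finset

/-- `a n` is the number of `4 × 2n` 0-1 matrices in which every row has exactly `n`
ones and every column has exactly `2` ones. -/
def balanced4Count (n : ℕ) : ℕ :=
  Fintype.card {M : Fin 4 → Fin (2 * n) → Bool //
    (∀ i, (Finset.univ.filter fun j => M i j = true).card = n) ∧
    (∀ j, (Finset.univ.filter fun i => M i j = true).card = 2)}

/-!
Read a balanced matrix by its rows `A, B, C, D`, subsets of the set of columns. Two ones in
every column means `C ∩ D = (A ∪ B)ᶜ` and `C ∪ D = (A ∩ B)ᶜ`. So once `A` and `B` are chosen,
`C` is `(A ∪ B)ᶜ` together with half of `A ∆ B`, a set of size `2m` where `m = |A \ B|`, and `D`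
is determined. Hence `a(n) = ∑_{A,B} C(2m, m)`, and counting the pairs `(A, B)` by `m` gives
`a(n) = C(2n, n) s(n)` with `s(n) = ∑_k C(n,k)² C(2k,k)`. Creative telescoping proves
`(n+2)² s(n+2) = (10n² + 30n + 23) s(n+1) - 9(n+1)² s(n)`, and the central binomial factors
turn this into the recurrence for `a`.
-/

open Nat

def chooseSqCentralBinomSum (n : ℕ) : ℕ :=
  ∑ k ∈ range (n + 1), n.choose k ^ 2 * k.centralBinom

theorem card_filter_fin_four_eq_two_iff (b : Fin 4 → Bool) :
    #{i | b i = true} = 2 ↔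
      ((b 2 = true ∧ b 3 = true) ↔ ¬(b 0 = true ∨ b 1 = true)) ∧
      ((b 2 = true ∨ b 3 = true) ↔ ¬(b 0 = true ∧ b 1 = true)) := by
  revert b; decide

section Rows

variable {α : Type*} [Fintype α] [DecidableEq α]

variable (α) in
def balancedRows (n : ℕ) : Finset ((Finset α × Finset α) × (Finset α × Finset α)) :=
  {x | #x.1.1 = n ∧ #x.1.2 = n ∧ #x.2.1 = n ∧ #x.2.2 = n ∧
    x.2.1 ∩ x.2.2 = (x.1.1 ∪ x.1.2)ᶜ ∧ x.2.1 ∪ x.2.2 = (x.1.1 ∩ x.1.2)ᶜ}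

theorem card_balancedMatrices (n : ℕ) :
    #{M : Fin 4 → α → Bool | (∀ i, #{j | M i j = true} = n) ∧ ∀ j, #{i | M i j = true} = 2}
      = #(balancedRows α n) := by
  refine card_nbij' (fun M => ((univ.filter (M 0 ·), univ.filter (M 1 ·)),
    (univ.filter (M 2 ·), univ.filter (M 3 ·))))
    (fun x => ![(· ∈ x.1.1), (· ∈ x.1.2), (· ∈ x.2.1), (· ∈ x.2.2)]) ?_ ?_ ?_ ?_
  · intro M hM
    simp only [coe_filter, mem_univ, true_and, Set.mem_ofPred_eq, balancedRows,
      card_filter_fin_four_eq_two_iff] at hM ⊢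
    refine ⟨hM.1 0, hM.1 1, hM.1 2, hM.1 3, ?_, ?_⟩ <;> ext j <;>
      simp only [mem_inter, mem_union, mem_compl, mem_filter, mem_univ, true_and]
    exacts [(hM.2 j).1, (hM.2 j).2]
  · rintro ⟨⟨A, B⟩, C, D⟩ hx
    simp only [coe_filter, mem_univ, true_and, Set.mem_ofPred_eq, balancedRows] at hx ⊢
    obtain ⟨hA, hB, hC, hD, hCD, hCD'⟩ := hx
    refine ⟨fun i => ?_, fun j => (card_filter_fin_four_eq_two_iff (fun i => _)).2 ?_⟩
    · fin_cases i <;> simpa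
    · simpa [imp_iff_not_or] using And.intro (Finset.ext_iff.1 hCD j) (Finset.ext_iff.1 hCD' j)
  · intro M _
    funext i j
    fin_cases i <;> simp
  · rintro ⟨⟨A, B⟩, C, D⟩ _
    ext <;> simp

theorem card_pairs_inter_eq_union_eq {P Q : Finset α} (hPQ : P ⊆ Q) {c : ℕ} (hc : #P ≤ c) :
    #{y : Finset α × Finset α | #y.1 = c ∧ y.1 ∩ y.2 = P ∧ y.1 ∪ y.2 = Q}
      = (#Q - #P).choose (c - #P) := by
  rw [← card_sdiff_of_subset hPQ, ← card_powersetCard]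
  refine card_nbij' (fun y => y.1 \ P) (fun E => (P ∪ E, Q \ E)) ?_ ?_ ?_ ?_
  · rintro ⟨C, D⟩ hy
    simp only [mem_coe, mem_filter, mem_univ, true_and, mem_powersetCard] at hy ⊢
    obtain ⟨rfl, rfl, rfl⟩ := hy
    rw [card_sdiff_of_subset inter_subset_left]
    exact ⟨sdiff_subset_sdiff subset_union_left subset_rfl, rfl⟩
  · intro E hE
    simp only [mem_coe, mem_filter, mem_univ, true_and, mem_powersetCard, subset_sdiff] at hE ⊢
    obtain ⟨⟨hEQ, hEP⟩, hE⟩ := hE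
    refine ⟨by rw [card_union_of_disjoint hEP.symm]; omega, ?_, ?_⟩ <;> ext x <;>
      have := @hEQ x <;> have := @hPQ x <;>
      have : x ∈ E → x ∉ P := fun h => disjoint_left.1 hEP h <;>
      simp only [mem_inter, mem_union, mem_sdiff] <;> tauto
  · rintro ⟨C, D⟩ hy
    simp only [mem_coe, mem_filter, mem_univ, true_and] at hy
    obtain ⟨-, rfl, rfl⟩ := hy
    ext x <;> simp only [mem_inter, mem_union, mem_sdiff] <;> tauto
  · intro E hE
    simp only [mem_coe, mem_powersetCard, subset_sdiff] at hE
    exact union_sdiff_cancel_left hE.1.2.symm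

theorem card_balancedRows_fiber {n : ℕ} (hα : Fintype.card α = 2 * n) {A B : Finset α}
    (hA : #A = n) (hB : #B = n) :
    #{y : Finset α × Finset α |
        #y.1 = n ∧ #y.2 = n ∧ y.1 ∩ y.2 = (A ∪ B)ᶜ ∧ y.1 ∪ y.2 = (A ∩ B)ᶜ}
      = centralBinom #(A \ B) := by
  have hunion := card_union_add_card_inter A B
  have hsdiff := card_sdiff_add_card_inter A B
  have hP := card_compl (A ∪ B)
  have hQ := card_compl (A ∩ B)
  have hle := card_le_univ (A ∪ B)
  have hchoose : (2 * #(A \ B)).choose #(A \ B)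
      = (#(A ∩ B)ᶜ - #(A ∪ B)ᶜ).choose (n - #(A ∪ B)ᶜ) := by congr 1 <;> omega
  rw [centralBinom_eq_two_mul_choose, hchoose,
    ← card_pairs_inter_eq_union_eq (compl_subset_compl.2 inter_subset_union) (by omega)]
  refine congrArg card (filter_congr fun y _ =>
    ⟨fun ⟨h1, _, h3⟩ => ⟨h1, h3⟩, fun ⟨h1, h3, h4⟩ => ⟨h1, ?_, h3, h4⟩⟩)
  have := card_union_add_card_inter y.1 y.2
  rw [h3, h4] at this
  omega

theorem card_powersetCard_filter_card_sdiff (A : Finset α) (k : ℕ) :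
    #{B ∈ powersetCard #A univ | #(A \ B) = k} = (#A).choose k * (#Aᶜ).choose k := by
  rw [← card_powersetCard k A, ← card_powersetCard k Aᶜ, ← card_product]
  refine card_nbij' (fun B => (A \ B, B \ A)) (fun XY => (A \ XY.1) ∪ XY.2) ?_ ?_ ?_ ?_
  · intro B hB
    simp only [mem_coe, mem_filter, mem_product, mem_powersetCard, subset_univ, true_and] at hB ⊢
    have h1 := card_sdiff_add_card_inter A B
    have h2 := card_sdiff_add_card_inter B A
    rw [inter_comm] at h2
    exact ⟨⟨sdiff_subset, hB.2⟩, fun x hx => mem_compl.2 (mem_sdiff.1 hx).2, by omega⟩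
  · rintro ⟨X, Y⟩ hXY
    simp only [mem_coe, mem_filter, mem_product, mem_powersetCard, subset_univ, true_and] at hXY ⊢
    obtain ⟨⟨hXA, rfl⟩, hYA, hYX⟩ := hXY
    have hdisj : Disjoint (A \ X) Y :=
      disjoint_left.2 fun x hx hy => mem_compl.1 (hYA hy) (mem_sdiff.1 hx).1
    have hAX : A \ ((A \ X) ∪ Y) = X := by
      ext x; have := @hXA x; have := @hYA x; simp only [mem_union, mem_sdiff, mem_compl] at *; tauto
    rw [card_union_of_disjoint hdisj, card_sdiff_of_subset hXA, hAX]
    have := card_le_card hXA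
    omega
  · intro B _
    ext x; simp only [mem_union, mem_sdiff]; tauto
  · rintro ⟨X, Y⟩ hXY
    simp only [mem_coe, mem_product, mem_powersetCard] at hXY
    obtain ⟨⟨hXA, -⟩, hYA, -⟩ := hXY
    ext x <;> have := @hXA x <;> have := @hYA x <;>
      simp only [mem_union, mem_sdiff, mem_compl] at * <;> tauto

theorem sum_powersetCard_card_sdiff {M : Type*} [AddCommMonoid M] (A : Finset α) (f : ℕ → M) :
    ∑ B ∈ powersetCard #A univ, f #(A \ B)
      = ∑ k ∈ range (#A + 1), ((#A).choose k * (#Aᶜ).choose k) • f k := by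
  rw [← sum_fiberwise_of_maps_to (g := fun B => #(A \ B)) (t := range (#A + 1))
    fun B _ => mem_range_succ_iff.2 (card_le_card sdiff_subset)]
  refine sum_congr rfl fun k _ => ?_
  rw [sum_congr rfl fun B hB => congrArg f (mem_filter.1 hB).2, sum_const,
    card_powersetCard_filter_card_sdiff]

theorem card_balancedRows_eq_sum {n : ℕ} (hα : Fintype.card α = 2 * n) :
    #(balancedRows α n)
      = ∑ A ∈ powersetCard n (univ : Finset α), ∑ B ∈ powersetCard n univ,
          centralBinom #(A \ B) := by
  rw [card_eq_sum_card_fiberwise (f := Prod.fst) (t := powersetCard n univ ×ˢ powersetCard n univ)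
    fun x hx => by simp_all [balancedRows], sum_product]
  refine sum_congr rfl fun A hA => sum_congr rfl fun B hB => ?_
  rw [← card_balancedRows_fiber hα (mem_powersetCard_univ.1 hA) (mem_powersetCard_univ.1 hB)]
  refine card_nbij' Prod.snd (fun y => ((A, B), y)) ?_ ?_ ?_ fun _ _ => rfl <;>
    · rintro ⟨_, _⟩ _
      simp_all [balancedRows]

theorem card_balancedRows {n : ℕ} (hα : Fintype.card α = 2 * n) :
    #(balancedRows α n) = n.centralBinom * chooseSqCentralBinomSum n := by
  have hinner : ∀ A ∈ powersetCard n (univ : Finset α),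
      ∑ B ∈ powersetCard n univ, centralBinom #(A \ B) = chooseSqCentralBinomSum n := by
    intro A hA
    rw [mem_powersetCard_univ] at hA
    have hAc : #Aᶜ = n := by rw [card_compl, hα, hA]; omega
    rw [← hA, sum_powersetCard_card_sdiff, hAc, hA, chooseSqCentralBinomSum]
    simp only [smul_eq_mul, sq]
  rw [card_balancedRows_eq_sum hα, sum_congr rfl hinner, sum_const, card_powersetCard,
    Finset.card_univ, hα, smul_eq_mul, centralBinom_eq_two_mul_choose]

end Rows

theorem balanced4Count_eq (n : ℕ) :
    balanced4Count n = n.centralBinom * chooseSqCentralBinomSum n := by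
  rw [balanced4Count, Fintype.card_subtype]
  convert (card_balancedMatrices n).trans (card_balancedRows (Fintype.card_fin _))

theorem cast_choose_mul_succ {R : Type*} [CommRing R] (n k : ℕ) :
    (n.choose k : R) * (n + 1) = (n + 1).choose k * (n + 1 - k) := by
  rcases le_or_gt k (n + 1) with hk | hk
  · exact_mod_cast congrArg (Nat.cast : ℕ → R) (choose_mul_succ_eq n k) |>.trans
      (by push_cast [Nat.cast_sub hk]; ring)
  · simp [choose_eq_zero_of_lt hk, choose_eq_zero_of_lt (Nat.lt_of_succ_lt hk)]

theorem cast_choose_succ_right_mul {R : Type*} [CommRing R] (n k : ℕ) :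
    (n.choose (k + 1) : R) * (k + 1) = n.choose k * (n - k) := by
  rcases le_or_gt k n with hk | hk
  · exact_mod_cast congrArg (Nat.cast : ℕ → R) (choose_succ_right_eq n k) |>.trans
      (by push_cast [Nat.cast_sub hk]; ring)
  · simp [choose_eq_zero_of_lt hk, choose_eq_zero_of_lt (Nat.lt_succ_of_lt hk)]

theorem cast_succ_mul_centralBinom_succ {R : Type*} [CommSemiring R] (n : ℕ) :
    ((n : R) + 1) * (n + 1).centralBinom = 2 * (2 * n + 1) * n.centralBinom := by
  exact_mod_cast congrArg (Nat.cast : ℕ → R) (succ_mul_centralBinom_succ n)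

theorem chooseSqCentralBinomSum_eq_sum_range {n N : ℕ} (h : n < N) :
    chooseSqCentralBinomSum n = ∑ k ∈ range N, n.choose k ^ 2 * k.centralBinom :=
  sum_subset (range_subset_range.2 h) fun k _ hk => by
    simp [choose_eq_zero_of_lt (by simpa using hk : n < k)]

/-- The certificate of Zeilberger's creative telescoping for the summand `C(n,k)² C(2k,k)`. -/
def chooseSqCentralBinomCert (n k : ℕ) : ℚ :=
  k ^ 3 * (3 * k - 4 * n - 8) * (n + 2).choose k ^ 2 * k.centralBinom / (n + 2) ^ 2

theorem chooseSqCentralBinom_summand_recurrence (n k : ℕ) :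
    9 * ((n : ℚ) + 1) ^ 2 * (n.choose k ^ 2 * k.centralBinom : ℕ)
      - (10 * (n : ℚ) ^ 2 + 30 * n + 23) * ((n + 1).choose k ^ 2 * k.centralBinom : ℕ)
      + ((n : ℚ) + 2) ^ 2 * ((n + 2).choose k ^ 2 * k.centralBinom : ℕ)
      = chooseSqCentralBinomCert n (k + 1) - chooseSqCentralBinomCert n k := by
  have h0 := cast_choose_mul_succ (R := ℚ) n k
  have h1 := cast_choose_mul_succ (R := ℚ) (n + 1) k
  have h2 := cast_choose_succ_right_mul (R := ℚ) (n + 2) k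
  have e0 : (n.choose k : ℚ) = ((n + 1).choose k) * (n + 1 - k) / (n + 1) := by
    rw [eq_div_iff (by positivity), h0]
  have e1 : ((n + 1).choose k : ℚ) = ((n + 2).choose k) * (n + 2 - k) / (n + 2) := by
    rw [eq_div_iff (by positivity)]; push_cast at h1 ⊢; linear_combination h1
  have e2 : ((n + 2).choose (k + 1) : ℚ) = ((n + 2).choose k) * (n + 2 - k) / (k + 1) := by
    rw [eq_div_iff (by positivity)]; push_cast at h2 ⊢; linear_combination h2
  have e3 : ((k + 1).centralBinom : ℚ) = 2 * (2 * k + 1) * k.centralBinom / (k + 1) := by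
    rw [eq_div_iff (by positivity), mul_comm, cast_succ_mul_centralBinom_succ]
  simp only [chooseSqCentralBinomCert]
  push_cast
  rw [e0, e1, e2, e3]
  field_simp
  ring

theorem chooseSqCentralBinomSum_recurrence (n : ℕ) :
    9 * ((n : ℚ) + 1) ^ 2 * chooseSqCentralBinomSum n
      - (10 * (n : ℚ) ^ 2 + 30 * n + 23) * chooseSqCentralBinomSum (n + 1)
      + ((n : ℚ) + 2) ^ 2 * chooseSqCentralBinomSum (n + 2) = 0 := by
  rw [chooseSqCentralBinomSum_eq_sum_range (N := n + 3) (by omega),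
    chooseSqCentralBinomSum_eq_sum_range (N := n + 3) (by omega),
    chooseSqCentralBinomSum_eq_sum_range (N := n + 3) (by omega)]
  simp only [Nat.cast_sum, mul_sum, ← sum_sub_distrib, ← sum_add_distrib,
    chooseSqCentralBinom_summand_recurrence, sum_range_sub]
  simp [chooseSqCentralBinomCert]

theorem balanced4Count_recurrence_general (n : ℕ) :
    36 * (2 * (n : ℤ) + 3) * (2 * n + 1) * (n + 1) * (balanced4Count n : ℤ)
      - 2 * (2 * (n : ℤ) + 3) * (10 * n ^ 2 + 30 * n + 23) * (balanced4Count (n + 1) : ℤ)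
      + ((n : ℤ) + 2) ^ 3 * (balanced4Count (n + 2) : ℤ) = 0 := by
  have h1 := cast_succ_mul_centralBinom_succ (R := ℚ) n
  have h2 := cast_succ_mul_centralBinom_succ (R := ℚ) (n + 1)
  qify
  simp only [balanced4Count_eq, Nat.cast_mul]
  push_cast at h2 ⊢
  linear_combination
    2 * (2 * (n : ℚ) + 3) * ((n + 1).centralBinom : ℚ) * chooseSqCentralBinomSum_recurrence n
    - 18 * (2 * (n : ℚ) + 3) * (n + 1) * (chooseSqCentralBinomSum n : ℚ) * h1
    + ((n : ℚ) + 2) ^ 2 * (chooseSqCentralBinomSum (n + 2) : ℚ) * h2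

/-- The recurrence for the number of balanced `4 × 2n` 0-1 matrices. -/
theorem balanced4Count_recurrence (n : ℕ) (hn : 0 < n) :
    36 * (2 * (n : ℤ) + 3) * (2 * n + 1) * (n + 1) * (balanced4Count n : ℤ)
      - 2 * (2 * (n : ℤ) + 3) * (10 * n ^ 2 + 30 * n + 23) * (balanced4Count (n + 1) : ℤ)
      + ((n : ℤ) + 2) ^ 3 * (balanced4Count (n + 2) : ℤ) = 0 :=
  balanced4Count_recurrence_general n
end

section
/- For all positive integers k and n, the number of k × n 0-1 matrices in which every row avoids the patterns 010 and 101 and every column avoids the patterns 010 and 101 equals the number of k × n 0-1 matrices in which every row avoids the patterns 000 and 111 and every column avoids the patterns 000 and 111. Moreover, the map sending the matrix (m_{i,j}) to the matrix whose (i,j) entry is m_{i,j} + i + j (mod 2) is a bijection between these two sets of matrices. -/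
open Finset

/-- A `k × n` matrix over `ZMod 2` avoids the patterns in `P` both horizontally
(every row, read left to right) and vertically (every column, read top to bottom),
as contiguous subwords. -/
def AvoidsHV (P : Finset (List (ZMod 2))) {k n : ℕ} (M : Fin k → Fin n → ZMod 2) : Prop :=
  (∀ i, ∀ p ∈ P, ¬ p <:+: List.ofFn fun j => M i j) ∧
  (∀ j, ∀ p ∈ P, ¬ p <:+: List.ofFn fun i => M i j)

instance (P : Finset (List (ZMod 2))) (k n : ℕ) (M : Fin k → Fin n → ZMod 2) :
    Decidable (AvoidsHV P M) := by
  unfold AvoidsHV; infer_instance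

/-- The chessboard mask: `(i, j)` entry of `M` is replaced by `M i j + i + j (mod 2)`. -/
def chessMask {k n : ℕ} (M : Fin k → Fin n → ZMod 2) : Fin k → Fin n → ZMod 2 :=
  fun i j => M i j + ((i : ℕ) : ZMod 2) + ((j : ℕ) : ZMod 2)


lemma infix3 {α} (a b c : α) (L : List α) :
    [a,b,c] <:+: L ↔ ∃ j, L[j]? = some a ∧ L[j+1]? = some b ∧ L[j+2]? = some c := by
  constructor
  · rintro ⟨s, t, rfl⟩
    refine ⟨s.length, ?_, ?_, ?_⟩ <;>
      simp [List.getElem?_append_right, List.getElem_append_right, Nat.le_refl,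
        Nat.le_add_right, Nat.add_sub_cancel_left]
  · rintro ⟨j, ha, hb, hc⟩
    have : [a,b,c] = (L.drop j).take 3 := by
      have h2 : j + 2 < L.length := by
        by_contra h
        simp [List.getElem?_eq_none (le_of_not_gt h)] at hc
      apply List.ext_getElem?
      intro i
      rcases i with _|_|_|i
      · simp_all [List.getElem?_take, List.getElem?_drop]
      · simp_all [List.getElem?_take, List.getElem?_drop]
      · simp_all [List.getElem?_take, List.getElem?_drop]
      · have : ¬ (i + 1 + 1 + 1 < 3) := by omega
        simp [List.getElem?_take, this]
    rw [this]
    exact ((List.take_prefix 3 _).isInfix).trans (L.drop_suffix j).isInfix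

lemma ofFn_triple {n} (g : Fin n → ZMod 2) (a b c : ZMod 2) :
    [a,b,c] <:+: List.ofFn g ↔ ∃ j : ℕ, ∃ h : j + 2 < n,
      g ⟨j, by omega⟩ = a ∧ g ⟨j+1, by omega⟩ = b ∧ g ⟨j+2, h⟩ = c := by
  rw [infix3]
  constructor
  · rintro ⟨j, ha, hb, hc⟩
    have h2 : j + 2 < n := by
      by_contra h
      simp [List.getElem?_eq_none, List.length_ofFn, le_of_not_gt h] at hc
    have hj : j < n := by omega
    have hj1 : j + 1 < n := by omega
    refine ⟨j, h2, ?_, ?_, ?_⟩ <;>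
      simp_all [List.getElem?_ofFn, List.ofFnNthVal]
  · rintro ⟨j, h2, ha, hb, hc⟩
    have hj : j < n := by omega
    have hj1 : j + 1 < n := by omega
    exact ⟨j, by simp_all [List.getElem?_ofFn, List.ofFnNthVal]⟩

lemma key1 {n} (g : Fin n → ZMod 2) :
    (∀ p ∈ ({[0,1,0],[1,0,1]} : Finset (List (ZMod 2))), ¬ p <:+: List.ofFn g) ↔
    ¬ ∃ j : ℕ, ∃ h : j + 2 < n,
      g ⟨j+1, by omega⟩ = g ⟨j, by omega⟩ + 1 ∧ g ⟨j+2, h⟩ = g ⟨j, by omega⟩ := by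
  constructor
  · rintro hav ⟨j, h, hb, hc⟩
    have tri : ∀ x y z : ZMod 2, (y = x+1 ∧ z = x) → (x=0∧y=1∧z=0) ∨ (x=1∧y=0∧z=1) := by decide
    rcases tri _ _ _ ⟨hb, hc⟩ with ⟨h1, h2, h3⟩ | ⟨h1, h2, h3⟩
    · exact hav [0,1,0] (by simp) ((ofFn_triple ..).2 ⟨j, h, h1, h2, h3⟩)
    · exact hav [1,0,1] (by simp) ((ofFn_triple ..).2 ⟨j, h, h1, h2, h3⟩)
  · intro hne p hp hinf
    apply hne
    simp only [Finset.mem_insert, Finset.mem_singleton] at hp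
    have tri : ∀ x y z : ZMod 2, (x=0∧y=1∧z=0) ∨ (x=1∧y=0∧z=1) → (y = x+1 ∧ z = x) := by decide
    rcases hp with rfl | rfl <;>
    · rw [ofFn_triple] at hinf
      obtain ⟨j, h, ha, hb, hc⟩ := hinf
      exact ⟨j, h, tri _ _ _ (by tauto)⟩

lemma key2 {n} (g : Fin n → ZMod 2) :
    (∀ p ∈ ({[0,0,0],[1,1,1]} : Finset (List (ZMod 2))), ¬ p <:+: List.ofFn g) ↔
    ¬ ∃ j : ℕ, ∃ h : j + 2 < n,
      g ⟨j+1, by omega⟩ = g ⟨j, by omega⟩ ∧ g ⟨j+2, h⟩ = g ⟨j, by omega⟩ := by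
  constructor
  · rintro hav ⟨j, h, hb, hc⟩
    have tri : ∀ x y z : ZMod 2, (y = x ∧ z = x) → (x=0∧y=0∧z=0) ∨ (x=1∧y=1∧z=1) := by decide
    rcases tri _ _ _ ⟨hb, hc⟩ with ⟨h1, h2, h3⟩ | ⟨h1, h2, h3⟩
    · exact hav [0,0,0] (by simp) ((ofFn_triple ..).2 ⟨j, h, h1, h2, h3⟩)
    · exact hav [1,1,1] (by simp) ((ofFn_triple ..).2 ⟨j, h, h1, h2, h3⟩)
  · intro hne p hp hinf
    apply hne
    simp only [Finset.mem_insert, Finset.mem_singleton] at hp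
    have tri : ∀ x y z : ZMod 2, (x=0∧y=0∧z=0) ∨ (x=1∧y=1∧z=1) → (y = x ∧ z = x) := by decide
    rcases hp with rfl | rfl <;>
    · rw [ofFn_triple] at hinf
      obtain ⟨j, h, ha, hb, hc⟩ := hinf
      exact ⟨j, h, tri _ _ _ (by tauto)⟩

lemma step {n} (g h : Fin n → ZMod 2) (c : ZMod 2)
    (hh : ∀ j, h j = g j + c + ((j : ℕ) : ZMod 2)) :
    (∃ j : ℕ, ∃ h2 : j + 2 < n,
      h ⟨j+1, by omega⟩ = h ⟨j, by omega⟩ ∧ h ⟨j+2, h2⟩ = h ⟨j, by omega⟩) ↔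
    (∃ j : ℕ, ∃ h2 : j + 2 < n,
      g ⟨j+1, by omega⟩ = g ⟨j, by omega⟩ + 1 ∧ g ⟨j+2, h2⟩ = g ⟨j, by omega⟩) := by
  apply exists_congr; intro j
  apply exists_congr; intro h2
  rw [hh, hh, hh]
  have z2 : ∀ c u v w t : ZMod 2,
      (u + c + (t+1) = v + c + t ∧ w + c + (t+2) = v + c + t) ↔ (u = v+1 ∧ w = v) := by decide
  have e1 : ((((j:ℕ)+1 : ℕ)) : ZMod 2) = ((j:ℕ) : ZMod 2) + 1 := by push_cast; ring
  have e2 : ((((j:ℕ)+2 : ℕ)) : ZMod 2) = ((j:ℕ) : ZMod 2) + 2 := by push_cast; ring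
  simp only [e1, e2]
  exact z2 _ _ _ _ _

lemma chessMask_invol {k n : ℕ} (M : Fin k → Fin n → ZMod 2) :
    chessMask (chessMask M) = M := by
  funext i j
  have h : ∀ a b c : ZMod 2, a + b + c + b + c = a := by decide
  exact h _ _ _

lemma mask_iff {k n : ℕ} (M : Fin k → Fin n → ZMod 2) :
    AvoidsHV {[0,1,0],[1,0,1]} M ↔ AvoidsHV {[0,0,0],[1,1,1]} (chessMask M) := by
  unfold AvoidsHV
  apply and_congr
  · apply forall_congr'; intro i
    rw [key1, key2]
    exact (not_congr (step (fun j => M i j) (fun j => chessMask M i j)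
      (((i : ℕ) : ZMod 2)) (fun j => rfl))).symm
  · apply forall_congr'; intro j
    rw [key1, key2]
    refine (not_congr (step (fun i => M i j) (fun i => chessMask M i j)
      (((j : ℕ) : ZMod 2)) (fun i => ?_))).symm
    show M i j + _ + _ = M i j + _ + _
    ring


/-- The number of `k × n` 0-1 matrices avoiding `010` and `101` in all rows and
columns equals the number avoiding `000` and `111` in all rows and columns, and the
chessboard mask is a bijection between the two sets. -/
theorem avoid010_card_eq_avoid000 (k n : ℕ) (hk : 0 < k) (hn : 0 < n) :
    Fintype.card {M : Fin k → Fin n → ZMod 2 // AvoidsHV {[0, 1, 0], [1, 0, 1]} M} =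
      Fintype.card {M : Fin k → Fin n → ZMod 2 // AvoidsHV {[0, 0, 0], [1, 1, 1]} M} ∧
    Set.BijOn (chessMask (k := k) (n := n))
      {M | AvoidsHV {[0, 1, 0], [1, 0, 1]} M}
      {M | AvoidsHV {[0, 0, 0], [1, 1, 1]} M} := by
  have minv : ∀ M : Fin k → Fin n → ZMod 2, chessMask (chessMask M) = M := chessMask_invol
  constructor
  · exact Fintype.card_congr
      ⟨fun M => ⟨chessMask M.1, (mask_iff M.1).1 M.2⟩,
       fun N => ⟨chessMask N.1, by
         apply (mask_iff _).2; rw [minv]; exact N.2⟩,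
       fun M => Subtype.ext (minv _), fun N => Subtype.ext (minv _)⟩
  · refine ⟨fun M hM => (mask_iff M).1 hM, fun M1 _ M2 _ h => by
      rw [← minv M1, h, minv], fun N hN => ?_⟩
    refine ⟨chessMask N, ?_, minv N⟩
    apply (mask_iff _).2
    rw [minv]
    exact hN
end

section
/- Let m(n) denote the number of 3 × n 0-1 matrices in which every row and every column avoids the patterns 010 and 101, with m(0) = 1. The generating function Σ_{n≥0} m(n)·t^n equals the rational function −(5t⁴ − 19t² − 4t − 1)/(t⁴ − 5t² − 2t + 1); equivalently, as formal power series, (t⁴ − 5t² − 2t + 1)·Σ_{n≥0} m(n)·t^n = 1 + 4t + 19t² − 5t⁴. -/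
/-!
Read column by column, the column condition says that every column is one of the six words
other than `010` and `101`, and each row condition only involves three consecutive columns.
So the admissible matrices with `n + 2` columns are the walks of length `n` in the transfer
graph on pairs of consecutive admissible columns, and `m (n + 2) = 𝟙ᵀ Aⁿ 𝟙` for its
`36 × 36` adjacency matrix `A`. A finite computation gives `𝟙ᵀ (A⁴ - 2A³ - 5A² + 1) = 0`,
hence `m (n + 6) + m (n + 2) = 2 m (n + 5) + 5 m (n + 4)`; together with the initial values
`1, 6, 36, 102, 378, 1260` this is the identity read coefficientwise.
-/

open Finset PowerSeries

/-- `m n` is the number of `3 × n` 0-1 matrices in which every row (read left to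
right) and every column (read top to bottom) avoids the patterns `010` and `101`.
Note `m 0 = 1` (the empty matrix). -/
def notAlone3Count (n : ℕ) : ℕ :=
  Fintype.card {M : Fin 3 → Fin n → Bool //
    (∀ i, ¬ [false, true, false] <:+: List.ofFn (fun j => M i j) ∧
          ¬ [true, false, true] <:+: List.ofFn (fun j => M i j)) ∧
    (∀ j, ¬ [false, true, false] <:+: List.ofFn (fun i => M i j) ∧
          ¬ [true, false, true] <:+: List.ofFn (fun i => M i j))}

open Matrix

section TripleChain

variable {α β ι : Type*}

def TripleChain (R : α → α → α → Prop) (l : List α) : Prop :=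
  ∀ a b c, [a, b, c] <:+: l → R a b c

variable {R : α → α → α → Prop}

theorem tripleChain_of_length_le_two {l : List α} (h : l.length ≤ 2) : TripleChain R l :=
  fun _ _ _ habc => absurd habc.length_le (by simp; omega)

theorem tripleChain_cons_cons_cons {a b c : α} {t : List α} :
    TripleChain R (a :: b :: c :: t) ↔ R a b c ∧ TripleChain R (b :: c :: t) := by
  simp only [TripleChain, List.infix_cons_iff (l₂ := b :: c :: t), List.cons_prefix_cons,
    List.nil_prefix, and_true]
  constructor
  · intro h
    exact ⟨h a b c (Or.inl ⟨rfl, rfl, rfl⟩), fun x y z hxyz => h x y z (Or.inr hxyz)⟩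
  · rintro ⟨habc, ht⟩ x y z (⟨rfl, rfl, rfl⟩ | hxyz)
    exacts [habc, ht x y z hxyz]

theorem tripleChain_triple {a b c : α} : TripleChain R [a, b, c] ↔ R a b c := by
  simp [tripleChain_cons_cons_cons, tripleChain_of_length_le_two]

theorem tripleChain_map (f : β → α) :
    ∀ l : List β, TripleChain R (l.map f) ↔ TripleChain (fun a b c => R (f a) (f b) (f c)) l
  | a :: b :: c :: t => by
    rw [List.map_cons, List.map_cons, List.map_cons, tripleChain_cons_cons_cons,
      tripleChain_cons_cons_cons, ← List.map_cons, ← List.map_cons, tripleChain_map f]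
  | [] | [_] | [_, _] => by simp [tripleChain_of_length_le_two]

theorem tripleChain_forall {R : ι → α → α → α → Prop} {l : List α} :
    TripleChain (fun a b c => ∀ i, R i a b c) l ↔ ∀ i, TripleChain (R i) l :=
  ⟨fun h i a b c habc => h a b c habc i, fun h a b c habc i => h i a b c habc⟩

end TripleChain

def MidNotIsolated (a b c : Bool) : Prop := a = b ∨ b = c

instance (a b c : Bool) : Decidable (MidNotIsolated a b c) := instDecidableOr

theorem avoids_010_101_iff (l : List Bool) :
    (¬ [false, true, false] <:+: l ∧ ¬ [true, false, true] <:+: l) ↔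
      TripleChain MidNotIsolated l := by
  constructor
  · rintro ⟨h010, h101⟩ a b c habc
    cases a <;> cases b <;> cases c <;> simp_all [MidNotIsolated]
  · intro h
    exact ⟨fun h' => by simpa [MidNotIsolated] using h _ _ _ h',
      fun h' => by simpa [MidNotIsolated] using h _ _ _ h'⟩

section Transfer

variable {α : Type*} [Fintype α]

theorem natCard_subtype_ofFn_succ (P : List α → Prop) (n : ℕ) :
    Nat.card {c : Fin (n + 1) → α // P (List.ofFn c)} =
      ∑ a, Nat.card {c : Fin n → α // P (a :: List.ofFn c)} := by
  rw [← Nat.card_sigma]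
  refine Nat.card_congr ((Equiv.subtypeEquiv (Fin.consEquiv fun _ => α).symm ?_).trans
    (Equiv.subtypeProdEquivSigmaSubtype fun a c => P (a :: List.ofFn c)))
  intro c
  simp only [List.ofFn_succ, Fin.consEquiv, Equiv.symm_mk, Equiv.coe_fn_mk]
  rfl

theorem natCard_subtype_and_left {β : Type*} (p : Prop) [Decidable p] (q : β → Prop) :
    Nat.card {x // p ∧ q x} = if p then Nat.card {x // q x} else 0 := by
  split_ifs with hp <;> simp [hp]

variable (R : α → α → α → Prop)

noncomputable def continuationCount (n : ℕ) (p : α × α) : ℕ :=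
  Nat.card {c : Fin n → α // TripleChain R (p.1 :: p.2 :: List.ofFn c)}

theorem continuationCount_zero : continuationCount R 0 = 1 := by
  funext p
  simp [continuationCount, tripleChain_of_length_le_two]

variable [DecidableEq α] [∀ a b c, Decidable (R a b c)]

def transferMatrix : Matrix (α × α) (α × α) ℕ :=
  fun p q => if p.2 = q.1 ∧ R p.1 p.2 q.2 then 1 else 0

theorem continuationCount_succ (n : ℕ) :
    continuationCount R (n + 1) = transferMatrix R *ᵥ continuationCount R n := by
  funext ⟨u, v⟩
  simp only [continuationCount, natCard_subtype_ofFn_succ (fun l => TripleChain R (u :: v :: l)),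
    tripleChain_cons_cons_cons, natCard_subtype_and_left]
  simp [mulVec, dotProduct, Fintype.sum_prod_type, transferMatrix, ite_and, continuationCount]

theorem continuationCount_eq_pow_mulVec (n : ℕ) :
    continuationCount R n = transferMatrix R ^ n *ᵥ 1 := by
  induction n with
  | zero => rw [pow_zero, one_mulVec, continuationCount_zero]
  | succ n ih => rw [continuationCount_succ, ih, pow_succ', mulVec_mulVec]

theorem natCard_tripleChain_add_two (n : ℕ) :
    Nat.card {c : Fin (n + 2) → α // TripleChain R (List.ofFn c)} =
      1 ⬝ᵥ (transferMatrix R ^ n *ᵥ 1) := by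
  rw [← continuationCount_eq_pow_mulVec, one_dotProduct, Fintype.sum_prod_type,
    natCard_subtype_ofFn_succ]
  refine sum_congr rfl fun a _ => ?_
  rw [natCard_subtype_ofFn_succ (fun l => TripleChain R (a :: l))]
  rfl

end Transfer

abbrev Column := {u : Fin 3 → Bool // MidNotIsolated (u 0) (u 1) (u 2)}

def RowsNotIsolated (u v w : Column) : Prop := ∀ i, MidNotIsolated (u.1 i) (v.1 i) (w.1 i)

instance (u v w : Column) : Decidable (RowsNotIsolated u v w) := Fintype.decidableForallFintype

theorem column_avoids_iff (u : Fin 3 → Bool) :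
    (¬ [false, true, false] <:+: List.ofFn u ∧ ¬ [true, false, true] <:+: List.ofFn u) ↔
      MidNotIsolated (u 0) (u 1) (u 2) := by
  rw [avoids_010_101_iff, List.ofFn_succ, List.ofFn_succ, List.ofFn_succ, List.ofFn_zero,
    tripleChain_triple]
  rfl

theorem rows_avoid_iff {n : ℕ} (c : Fin n → Column) :
    (∀ i, ¬ [false, true, false] <:+: List.ofFn (fun j => (c j).1 i) ∧
      ¬ [true, false, true] <:+: List.ofFn (fun j => (c j).1 i)) ↔
      TripleChain RowsNotIsolated (List.ofFn c) := by
  simp only [avoids_010_101_iff]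
  refine (forall_congr' fun i => ?_).trans (tripleChain_forall (R := fun i (u v w : Column) =>
    MidNotIsolated (u.1 i) (v.1 i) (w.1 i))).symm
  rw [← tripleChain_map (R := MidNotIsolated) (fun u : Column => u.1 i), List.map_ofFn]
  rfl

theorem notAlone3Count_eq_natCard (n : ℕ) :
    notAlone3Count n =
      Nat.card {c : Fin n → Column // TripleChain RowsNotIsolated (List.ofFn c)} := by
  rw [notAlone3Count, ← Nat.card_eq_fintype_card]
  exact Nat.card_congr
    { toFun := fun M => ⟨fun j => ⟨fun i => M.1 i j, (column_avoids_iff _).1 (M.2.2 j)⟩,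
        (rows_avoid_iff _).1 M.2.1⟩
      invFun := fun c => ⟨fun i j => (c.1 j).1 i,
        (rows_avoid_iff c.1).2 c.2, fun j => (column_avoids_iff _).2 (c.1 j).2⟩
      left_inv := fun _ => rfl
      right_inv := fun _ => rfl }

abbrev columnTransfer : Matrix (Column × Column) (Column × Column) ℕ :=
  transferMatrix RowsNotIsolated

theorem notAlone3Count_add_two (n : ℕ) :
    notAlone3Count (n + 2) = (1 ᵥ* columnTransfer ^ n) ⬝ᵥ 1 := by
  rw [notAlone3Count_eq_natCard, natCard_tripleChain_add_two, dotProduct_mulVec]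

theorem one_vecMul_columnTransfer_recurrence :
    (1 : Column × Column → ℕ) ᵥ* columnTransfer ^ 4 + 1 =
      2 • (1 ᵥ* columnTransfer ^ 3) + 5 • (1 ᵥ* columnTransfer ^ 2) := by
  -- the kernel evaluates chains of vector-matrix products far faster than matrix powers
  simp only [pow_succ, pow_zero, ← vecMul_vecMul, vecMul_one]
  decide +kernel

theorem notAlone3Count_recurrence (n : ℕ) :
    notAlone3Count (n + 6) + notAlone3Count (n + 2) =
      2 * notAlone3Count (n + 5) + 5 * notAlone3Count (n + 4) := by
  have shift (k : ℕ) :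
      (1 ᵥ* columnTransfer ^ k ᵥ* columnTransfer ^ n) ⬝ᵥ 1 = notAlone3Count (n + k + 2) := by
    rw [notAlone3Count_add_two, vecMul_vecMul, ← pow_add, add_comm k]
  have := congrArg (fun v => (v ᵥ* columnTransfer ^ n) ⬝ᵥ 1) one_vecMul_columnTransfer_recurrence
  simpa only [add_vecMul, smul_vecMul, add_dotProduct, smul_dotProduct, shift,
    ← notAlone3Count_add_two, smul_eq_mul, add_assoc, Nat.reduceAdd] using this

theorem notAlone3Count_initial :
    notAlone3Count 0 = 1 ∧ notAlone3Count 1 = 6 ∧ notAlone3Count 2 = 36 ∧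
      notAlone3Count 3 = 102 ∧ notAlone3Count 4 = 378 ∧ notAlone3Count 5 = 1260 := by
  refine ⟨by decide, by decide, ?_⟩
  simp only [notAlone3Count_add_two, pow_succ, pow_zero, ← vecMul_vecMul, vecMul_one]
  decide +kernel

/-- The generating function `Σ m(n) tⁿ` equals
`−(5t⁴ − 19t² − 4t − 1)/(t⁴ − 5t² − 2t + 1)`, stated as an identity of formal
power series: `(t⁴ − 5t² − 2t + 1) · Σ m(n) tⁿ = 1 + 4t + 19t² − 5t⁴`. -/
theorem notAlone3_generatingFunction :
    ((X : PowerSeries ℤ) ^ 4 - 5 * X ^ 2 - 2 * X + 1) *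
        PowerSeries.mk (fun n => (notAlone3Count n : ℤ)) =
      1 + 4 * X + 19 * X ^ 2 - 5 * X ^ 4 := by
  obtain ⟨h0, h1, h2, h3, h4, h5⟩ := notAlone3Count_initial
  ext n
  simp only [← map_ofNat C, sub_mul, add_mul, mul_assoc, map_add, map_sub, coeff_C_mul, one_mul]
  rcases n with _ | _ | _ | _ | _ | _ | n <;>
    simp [coeff_X_pow_mul', coeff_succ_X_mul, coeff_X_pow, coeff_X, coeff_one,
      h0, h1, h2, h3, h4, h5]
  have recurrence : (notAlone3Count (n + 6) + notAlone3Count (n + 2) : ℤ) =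
      2 * notAlone3Count (n + 5) + 5 * notAlone3Count (n + 4) := by
    exact_mod_cast notAlone3Count_recurrence n
  linear_combination recurrence
end

section
/- Let m(n) denote the number of 3 × n 0-1 matrices in which every row and every column avoids the patterns 010 and 101. Then for every integer n ≥ 1, m(n+4) = 2·m(n+3) + 5·m(n+2) − m(n). -/
open Finset

abbrev C3 := Fin 3 → Bool
def colOK (c : C3) : Prop :=
  ¬(c 0 = false ∧ c 1 = true ∧ c 2 = false) ∧ ¬(c 0 = true ∧ c 1 = false ∧ c 2 = true)
instance : DecidablePred colOK := fun _ => by unfold colOK; infer_instance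
def tripOK (a b c : C3) : Prop :=
  ∀ i, ¬(a i = false ∧ b i = true ∧ c i = false) ∧ ¬(a i = true ∧ b i = false ∧ c i = true)
instance (a b c : C3) : Decidable (tripOK a b c) := by unfold tripOK; infer_instance
def noTrip : List C3 → Prop
  | a :: b :: c :: t => tripOK a b c ∧ noTrip (b :: c :: t)
  | _ => True
instance noTripDec : (l : List C3) → Decidable (noTrip l)
  | [] => .isTrue (by simp [noTrip])
  | [_] => .isTrue (by simp [noTrip])
  | [_, _] => .isTrue (by simp [noTrip])
  | a :: b :: c :: t =>
    have : Decidable (noTrip (b :: c :: t)) := noTripDec _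
    decidable_of_iff (tripOK a b c ∧ noTrip (b :: c :: t)) (by rw [noTrip])
def goodP (l : List C3) : Prop := (∀ c ∈ l, colOK c) ∧ noTrip l
instance : DecidablePred goodP := fun _ => by unfold goodP; infer_instance


lemma rowsAvoid_iff : ∀ L : List C3,
    (∀ i : Fin 3, ¬ [false, true, false] <:+: L.map (fun c => c i) ∧
                  ¬ [true, false, true] <:+: L.map (fun c => c i)) ↔ noTrip L
  | [] => iff_of_true (fun i => ⟨fun h => by simpa using h.length_le, fun h => by simpa using h.length_le⟩) (by simp [noTrip])
  | [_] => iff_of_true (fun i => ⟨fun h => by simpa using h.length_le, fun h => by simpa using h.length_le⟩) (by simp [noTrip])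
  | [_, _] => iff_of_true (fun i => ⟨fun h => by simpa using h.length_le, fun h => by simpa using h.length_le⟩) (by simp [noTrip])
  | a :: b :: c :: t => by
      have IH := rowsAvoid_iff (b :: c :: t)
      rw [noTrip, ← IH]
      simp only [List.map_cons, List.infix_cons_iff, not_or, List.cons_prefix_cons,
        List.nil_prefix, and_true, forall_and, tripOK, eq_comm]
      tauto

lemma colAvoid (c : C3) :
    (¬ [false, true, false] <:+: List.ofFn (fun i => c i) ∧
     ¬ [true, false, true] <:+: List.ofFn (fun i => c i)) ↔ colOK c := by
  revert c; decide

def N (n : ℕ) : ℕ := Fintype.card {w : Fin n → C3 // goodP (List.ofFn w)}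

lemma count_eq (n : ℕ) : notAlone3Count n = N n := by
  refine Fintype.card_congr (Equiv.subtypeEquiv
    ⟨fun M j i => M i j, fun w i j => w j i, fun _ => rfl, fun _ => rfl⟩ fun M => ?_)
  have hrows : (∀ i, ¬ [false, true, false] <:+: List.ofFn (fun j => M i j) ∧
          ¬ [true, false, true] <:+: List.ofFn (fun j => M i j)) ↔
      noTrip (List.ofFn fun j i => M i j) := by
    rw [← rowsAvoid_iff]
    simp only [List.map_ofFn, Function.comp_def]
  have hcols : (∀ j, ¬ [false, true, false] <:+: List.ofFn (fun i => M i j) ∧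
          ¬ [true, false, true] <:+: List.ofFn (fun i => M i j)) ↔
      (∀ c ∈ List.ofFn fun j i => M i j, colOK c) := by
    rw [List.forall_mem_ofFn_iff]
    exact forall_congr' fun j => colAvoid fun i => M i j
  rw [goodP]
  exact ⟨fun h => ⟨hcols.mp h.2, hrows.mp h.1⟩, fun h => ⟨hrows.mpr h.2, hcols.mpr h.1⟩⟩


def g : ℕ → C3 → C3 → ℕ
  | 0, a, b => if colOK a ∧ colOK b then 1 else 0
  | n+1, a, b => if colOK a then ∑ c : C3, if tripOK a b c then g n b c else 0 else 0

lemma g_succ (n : ℕ) (a b : C3) :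
    g (n+1) a b = if colOK a then ∑ c : C3, if tripOK a b c then g n b c else 0 else 0 := by
  simp only [g]

def hc (n : ℕ) (a b : C3) : ℕ :=
  Fintype.card {w : Fin (n+2) → C3 // goodP (List.ofFn w) ∧ w 0 = a ∧ w 1 = b}

lemma card_fiber {α β : Type*} [Fintype α] [Fintype β] [DecidableEq β]
    (p : α → Prop) [DecidablePred p] (f : α → β) :
    Fintype.card {x // p x} = ∑ b : β, Fintype.card {x // p x ∧ f x = b} := by
  rw [Fintype.card_subtype,
    Finset.card_eq_sum_card_fiberwise (f := f) (t := Finset.univ) (fun x _ => Finset.mem_univ (f x))]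
  refine Finset.sum_congr rfl fun b _ => ?_
  rw [Fintype.card_subtype]
  congr 1
  ext x
  simp [Finset.mem_filter, and_assoc]

lemma goodP_cons3 (x y z : C3) (t : List C3) :
    goodP (x :: y :: z :: t) ↔ colOK x ∧ tripOK x y z ∧ goodP (y :: z :: t) := by
  rw [goodP, goodP, noTrip]
  simp only [List.forall_mem_cons]
  tauto

lemma ofFn_eq_cons3 {n : ℕ} (w : Fin (n + 3) → C3) :
    List.ofFn w = w 0 :: w 1 :: w 2 :: List.ofFn (fun i : Fin n => w i.succ.succ.succ) := by
  simp [List.ofFn_succ, Fin.succ_zero_eq_one, Fin.succ_one_eq_two]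

lemma ofFn_tail_eq {n : ℕ} (w : Fin (n + 3) → C3) :
    List.ofFn (Fin.tail w) = w 1 :: w 2 :: List.ofFn (fun i : Fin n => w i.succ.succ.succ) := by
  simp [List.ofFn_succ, Fin.tail, Fin.succ_zero_eq_one, Fin.succ_one_eq_two]

lemma goodP_succ3 {n : ℕ} (w : Fin (n + 3) → C3) :
    goodP (List.ofFn w) ↔
      colOK (w 0) ∧ tripOK (w 0) (w 1) (w 2) ∧ goodP (List.ofFn (Fin.tail w)) := by
  rw [ofFn_eq_cons3, ofFn_tail_eq, goodP_cons3]

lemma cons_one {n : ℕ} (x : C3) (v : Fin (n + 2) → C3) :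
    (Fin.cons x v : Fin (n+3) → C3) 1 = v 0 := by
  rw [← Fin.succ_zero_eq_one, Fin.cons_succ]

lemma cons_two {n : ℕ} (x : C3) (v : Fin (n + 2) → C3) :
    (Fin.cons x v : Fin (n+3) → C3) 2 = v 1 := by
  rw [← Fin.succ_one_eq_two, Fin.cons_succ]

lemma tail_zero {n : ℕ} (w : Fin (n + 3) → C3) : Fin.tail w 0 = w 1 := by
  rw [Fin.tail, Fin.succ_zero_eq_one]

lemma tail_one {n : ℕ} (w : Fin (n + 3) → C3) : Fin.tail w 1 = w 2 := by
  rw [Fin.tail, Fin.succ_one_eq_two]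

lemma card_ext (n : ℕ) (a b c : C3) :
    Fintype.card {w : Fin (n+3) → C3 //
        (goodP (List.ofFn w) ∧ w 0 = a ∧ w 1 = b) ∧ w 2 = c}
      = if colOK a ∧ tripOK a b c then hc n b c else 0 := by
  split
  · next hcond =>
    rw [hc]
    exact Fintype.card_congr
      { toFun := fun x => ⟨Fin.tail x.1, by
          have hg' := (goodP_succ3 x.1).mp x.2.1.1
          exact ⟨hg'.2.2, by rw [tail_zero, x.2.1.2.2], by rw [tail_one, x.2.2]⟩⟩
        invFun := fun v => ⟨Fin.cons a v.1, by
          refine ⟨⟨?_, by simp, by rw [cons_one, v.2.2.1]⟩, by rw [cons_two, v.2.2.2]⟩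
          rw [goodP_succ3, Fin.cons_zero, cons_one, cons_two, Fin.tail_cons, v.2.2.1, v.2.2.2]
          exact ⟨hcond.1, hcond.2, v.2.1⟩⟩
        left_inv := fun x => Subtype.ext (by
          have h := Fin.cons_self_tail x.1
          rw [x.2.1.2.1] at h
          exact h)
        right_inv := fun v => Subtype.ext (funext fun i => rfl) }
  · next hcond =>
    rw [Fintype.card_eq_zero_iff]
    refine ⟨fun ⟨w, ⟨hg, h0, h1⟩, h2⟩ => hcond ?_⟩
    have hg' := (goodP_succ3 w).mp hg
    rw [← h0, ← h1, ← h2]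
    exact ⟨hg'.1, hg'.2.1⟩

lemma hc_succ (n : ℕ) (a b : C3) :
    hc (n+1) a b = if colOK a then ∑ c : C3, if tripOK a b c then hc n b c else 0 else 0 := by
  rw [hc, card_fiber _ (fun w => w 2)]
  rw [Finset.sum_congr rfl (fun c _ => card_ext n a b c)]
  split_ifs with hA
  · refine Finset.sum_congr rfl fun c _ => ?_
    simp [hA]
  · simp [hA]

lemma Nsum (n : ℕ) : N (n+2) = ∑ a : C3, ∑ b : C3, hc n a b := by
  rw [N, card_fiber _ (fun w => (w 0, w 1)), Fintype.sum_prod_type]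
  refine Finset.sum_congr rfl fun a _ => Finset.sum_congr rfl fun b _ => ?_
  rw [hc]
  exact Fintype.card_congr (Equiv.subtypeEquiv (Equiv.refl _) (fun w => by simp [Prod.ext_iff]))

set_option maxRecDepth 40000 in
lemma hc_eq_g : ∀ n, ∀ a b : C3, hc n a b = g n a b := by
  intro n
  induction n with
  | zero => decide
  | succ n IH =>
    intro a b
    rw [hc_succ, g_succ]
    split_ifs with hA
    · exact Finset.sum_congr rfl fun c _ => by
        split_ifs with hT
        exacts [IH b c, rfl]
    · rfl

set_option maxRecDepth 40000 in
lemma grec : ∀ n, ∀ a b : C3, g (n+4) a b + g n a b = 2 * g (n+3) a b + 5 * g (n+2) a b := by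
  intro n
  induction n with
  | zero => decide
  | succ n IH =>
    intro a b
    show g (n+4+1) a b + g (n+0+1) a b = 2 * g (n+3+1) a b + 5 * g (n+2+1) a b
    rw [g_succ, g_succ, g_succ, g_succ]
    split_ifs with hA
    · rw [← Finset.sum_add_distrib, Finset.mul_sum, Finset.mul_sum, ← Finset.sum_add_distrib]
      refine Finset.sum_congr rfl fun c _ => ?_
      split_ifs with hT
      · exact IH b c
      · simp
    · simp

lemma m_eq (k : ℕ) : notAlone3Count (k+2) = ∑ a : C3, ∑ b : C3, g k a b := by
  rw [count_eq, Nsum]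
  exact Finset.sum_congr rfl fun a _ => Finset.sum_congr rfl fun b _ => hc_eq_g k a b

lemma m1 : notAlone3Count 1 = 6 := by
  rw [count_eq]; decide

/-- For every `n ≥ 1`, `m(n+4) = 2·m(n+3) + 5·m(n+2) − m(n)`. -/
theorem notAlone3_recurrence (n : ℕ) (hn : 1 ≤ n) :
    (notAlone3Count (n + 4) : ℤ) =
      2 * (notAlone3Count (n + 3) : ℤ) + 5 * (notAlone3Count (n + 2) : ℤ)
        - (notAlone3Count n : ℤ) := by
  rcases Nat.lt_or_ge n 2 with h | h
  · have hn1 : n = 1 := by omega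
    subst hn1
    have e5 : notAlone3Count (1+4) = ∑ a : C3, ∑ b : C3, g 3 a b := m_eq 3
    have e4 : notAlone3Count (1+3) = ∑ a : C3, ∑ b : C3, g 2 a b := m_eq 2
    have e3 : notAlone3Count (1+2) = ∑ a : C3, ∑ b : C3, g 1 a b := m_eq 1
    rw [e5, e4, e3, m1]
    have key : (∑ a : C3, ∑ b : C3, g 3 a b) + 6
        = 2 * (∑ a : C3, ∑ b : C3, g 2 a b) + 5 * (∑ a : C3, ∑ b : C3, g 1 a b) := by
      decide
    omega
  · obtain ⟨k, rfl⟩ : ∃ k, n = k + 2 := ⟨n - 2, by omega⟩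
    have e6 : notAlone3Count (k+2+4) = ∑ a : C3, ∑ b : C3, g (k+4) a b := m_eq (k+4)
    have e5 : notAlone3Count (k+2+3) = ∑ a : C3, ∑ b : C3, g (k+3) a b := m_eq (k+3)
    have e4 : notAlone3Count (k+2+2) = ∑ a : C3, ∑ b : C3, g (k+2) a b := m_eq (k+2)
    have e2 : notAlone3Count (k+2) = ∑ a : C3, ∑ b : C3, g k a b := m_eq k
    rw [e6, e5, e4, e2]
    have key : (∑ a : C3, ∑ b : C3, g (k+4) a b) + (∑ a : C3, ∑ b : C3, g k a b)
        = 2 * (∑ a : C3, ∑ b : C3, g (k+3) a b) + 5 * (∑ a : C3, ∑ b : C3, g (k+2) a b) := by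
      rw [Finset.mul_sum, Finset.mul_sum, ← Finset.sum_add_distrib, ← Finset.sum_add_distrib]
      refine Finset.sum_congr rfl fun a _ => ?_
      rw [Finset.mul_sum, Finset.mul_sum, ← Finset.sum_add_distrib, ← Finset.sum_add_distrib]
      exact Finset.sum_congr rfl fun b _ => grec k a b
    omega
end

section
/- For every positive integer n, the number of 4 × 2n 0-1 matrices in which every row has exactly n ones and every column has exactly 2 ones equals the number of walks of length 2n on the cubic lattice ℤ³ that begin and end at the origin, i.e., the number of sequences (s_1, …, s_{2n}) of vectors with each s_j ∈ {(1,0,0), (−1,0,0), (0,1,0), (0,−1,0), (0,0,1), (0,0,−1)} and s_1 + s_2 + ⋯ + s_{2n} = (0,0,0). -/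
open Finset

/-- The number of walks of length `2n` on the cubic lattice `ℤ³` beginning and
ending at the origin: sequences of `2n` steps, each one of `±e₁, ±e₂, ±e₃`,
summing to zero. -/
noncomputable def cubicWalkCount (n : ℕ) : ℕ :=
  Nat.card {s : Fin (2 * n) → Fin 3 → ℤ //
    (∀ j, ∃ i, s j = Pi.single i 1 ∨ s j = -Pi.single i 1) ∧
    ∑ j, s j = 0}

def sg : Fin 3 → Fin 4 → ℤ := ![![1,1,-1,-1], ![1,-1,1,-1], ![1,-1,-1,1]]

def stepOf (c : Fin 4 → Bool) : Fin 3 → ℤ :=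
  fun i => (∑ k, sg i k * (if c k = true then 1 else 0)) / 2

def colOf (s : Fin 3 → ℤ) : Fin 4 → Bool :=
  fun k => decide (1 + ∑ i, sg i k * s i = 2)

lemma key1_s10 : ∀ c : Fin 4 → Bool, (Finset.univ.filter fun k => c k = true).card = 2 →
    ((∃ i : Fin 3, stepOf c = Pi.single i 1 ∨ stepOf c = -Pi.single i 1) ∧
     (∀ k, colOf (stepOf c) k = c k) ∧
     (∀ i, 2 * stepOf c i = ∑ k, sg i k * (if c k = true then 1 else 0))) := by decide

lemma key2_s10 : ∀ i : Fin 3,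
    (((Finset.univ.filter fun k => colOf (Pi.single i 1) k = true).card = 2 ∧
      stepOf (colOf (Pi.single i 1)) = Pi.single i 1) ∧
     ((Finset.univ.filter fun k => colOf (-Pi.single i 1) k = true).card = 2 ∧
      stepOf (colOf (-Pi.single i 1)) = -Pi.single i 1)) := by decide

lemma stepcol (s : Fin 3 → ℤ) (h : ∃ i, s = Pi.single i 1 ∨ s = -Pi.single i 1) :
    (Finset.univ.filter fun k => colOf s k = true).card = 2 ∧ stepOf (colOf s) = s := by
  obtain ⟨i, h | h⟩ := h <;> subst h
  · exact (key2_s10 i).1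
  · exact (key2_s10 i).2

lemma rows_iff (n : ℕ) (M : Fin 4 → Fin (2*n) → Bool)
    (hcol : ∀ j, (Finset.univ.filter fun i => M i j = true).card = 2) :
    (∀ i, (Finset.univ.filter fun j => M i j = true).card = n) ↔
    (∀ i : Fin 3, ∑ j, stepOf (fun k => M k j) i = 0) := by
  set R : Fin 4 → ℤ := fun k => ∑ j, (if M k j = true then 1 else 0) with hRdef
  have hR : ∀ k, ((Finset.univ.filter fun j => M k j = true).card : ℤ) = R k := by
    intro k
    rw [Finset.card_filter]
    push_cast
    rfl
  have hswap : ∀ i : Fin 3, ∑ j, 2 * stepOf (fun k => M k j) i = ∑ k, sg i k * R k := by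
    intro i
    have h1 : ∀ j : Fin (2*n), 2 * stepOf (fun k => M k j) i
        = ∑ k, sg i k * (if M k j = true then 1 else 0) := fun j =>
      (key1_s10 _ (hcol j)).2.2 i
    rw [Finset.sum_congr rfl (fun j _ => h1 j), Finset.sum_comm]
    refine Finset.sum_congr rfl fun k _ => ?_
    simp only [hRdef, Finset.mul_sum]
  have hRsum : R 0 + R 1 + R 2 + R 3 = 4 * n := by
    have h2 : ∀ j : Fin (2*n), ∑ k, (if M k j = true then (1:ℤ) else 0) = 2 := by
      intro j
      have := hR  -- not directly; compute from hcol
      have hc := hcol j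
      have : ((Finset.univ.filter fun i => M i j = true).card : ℤ)
          = ∑ k, (if M k j = true then (1:ℤ) else 0) := by
        rw [Finset.card_filter]; push_cast; rfl
      rw [← this, hc]; norm_num
    have : ∑ k, R k = 4 * n := by
      rw [hRdef, Finset.sum_comm]
      rw [Finset.sum_congr rfl (fun j _ => h2 j)]
      simp [Finset.card_fin]
      push_cast
      ring
    rw [Fin.sum_univ_four] at this
    exact this
  constructor
  · intro hrow i
    have hRn : ∀ k, R k = (n : ℤ) := by
      intro k; rw [← hR k, hrow k]
    have h3 : ∑ j, 2 * stepOf (fun k => M k j) i = 0 := by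
      rw [hswap i]
      rw [Finset.sum_congr rfl (fun k _ => by rw [hRn k])]
      rw [← Finset.sum_mul]
      fin_cases i <;> simp [sg, Fin.sum_univ_four]
    rw [← Finset.mul_sum] at h3
    linarith
  · intro hsum i
    have hE : ∀ i' : Fin 3, ∑ k, sg i' k * R k = 0 := by
      intro i'
      rw [← hswap i', ← Finset.mul_sum, hsum i', mul_zero]
    have e0 := hE 0
    have e1 := hE 1
    have e2 := hE 2
    rw [Fin.sum_univ_four] at e0 e1 e2
    simp only [sg, Matrix.cons_val_zero, Matrix.cons_val_one, Matrix.head_cons,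
      Matrix.cons_val_two, Matrix.tail_cons, Matrix.cons_val_three] at e0 e1 e2
    have hRi : R i = (n : ℤ) := by
      fin_cases i
      · show R 0 = (n : ℤ); linarith
      · show R 1 = (n : ℤ); linarith
      · show R 2 = (n : ℤ); linarith
      · show R 3 = (n : ℤ); linarith
    have := hR i
    rw [hRi] at this
    exact_mod_cast this

/-- The number of balanced `4 × 2n` 0-1 matrices equals the number of walks with
`2n` steps on the cubic lattice `ℤ³` beginning and ending at the origin. -/
theorem balanced4Count_eq_cubicWalkCount (n : ℕ) (hn : 0 < n) :
    balanced4Count n = cubicWalkCount n := by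

  classical
  rw [balanced4Count, cubicWalkCount, ← Nat.card_eq_fintype_card]
  apply Nat.card_congr
  refine
    { toFun := fun p => ⟨fun j => stepOf (fun k => p.1 k j), fun j => (key1_s10 _ (p.2.2 j)).1, ?_⟩
      invFun := fun q => ⟨fun k j => colOf (q.1 j) k, ?_, ?_⟩
      left_inv := ?_
      right_inv := ?_ }
  · -- sum zero
    funext i
    rw [Finset.sum_apply, Pi.zero_apply]
    exact (rows_iff n p.1 p.2.2).mp p.2.1 i
  · -- row condition for invFun
    have hcol : ∀ j, (Finset.univ.filter fun k => colOf (q.1 j) k = true).card = 2 :=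
      fun j => (stepcol _ (q.2.1 j)).1
    refine (rows_iff n (fun k j => colOf (q.1 j) k) hcol).mpr ?_
    intro i
    have hst : ∀ j, stepOf (fun k => colOf (q.1 j) k) = q.1 j :=
      fun j => (stepcol _ (q.2.1 j)).2
    rw [Finset.sum_congr rfl (fun j _ => by rw [hst j])]
    have := congrFun q.2.2 i
    rw [Finset.sum_apply, Pi.zero_apply] at this
    exact this
  · -- column condition for invFun
    exact fun j => (stepcol _ (q.2.1 j)).1
  · -- left_inv
    intro p
    apply Subtype.ext
    funext k j
    exact (key1_s10 _ (p.2.2 j)).2.1 k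
  · -- right_inv
    intro q
    apply Subtype.ext
    funext j
    exact (stepcol _ (q.2.1 j)).2
end
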